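/- Let Z be a deck with multiplicities 𝐦 = m·𝟏_n (n card types, each of multiplicity m), so N = nm. Then the expected number of correct guesses under the worst (expectation-minimizing) strategy satisfies E[S_𝐦^−] = Σ_{j=0}^{m−1} Σ_{t=0}^{nm−1} P(T_j ≥ t)/(nm − t), where T_j is the last time, counting from the top of the deck, that no card type has appeared more than j times (with T_0 = 0). -/
import Mathlib


open Finset

/-- The set of decks (words) with `n` card types where type `i` appears exactly `m i` times. -/
def decks (n : ℕ) (m : Fin n → ℕ) : Finset (Fin (∑ i, m i) → Fin n) :=
  Finset.univ.filter fun w => ∀ i, (Finset.univ.filter fun s => w s = i).card = m i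

/-- Probability of an event under the uniformly random deck with multiplicities `m`. -/
noncomputable def pr (n : ℕ) (m : Fin n → ℕ)
    (E : (Fin (∑ i, m i) → Fin n) → Prop) : ℝ :=
  letI := Classical.decPred E
  (((decks n m).filter E).card : ℝ) / ((decks n m).card : ℝ)

/-- Expectation of a function of the uniformly random deck with multiplicities `m`. -/
noncomputable def expect (n : ℕ) (m : Fin n → ℕ)
    (f : (Fin (∑ i, m i) → Fin n) → ℝ) : ℝ :=
  (∑ w ∈ decks n m, f w) / ((decks n m).card : ℝ)

/-- `T j w` : the last time `t` such that no card type appears more than `j` times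
among the first `t` cards `w 0, …, w (t-1)`. -/
noncomputable def T {n N : ℕ} (j : ℕ) (w : Fin N → Fin n) : ℕ :=
  sSup {t | t ≤ N ∧ ∀ i : Fin n,
    (Finset.univ.filter fun s : Fin N => (s : ℕ) < t ∧ w s = i).card ≤ j}

/-- `W j t w` : the number of `(j+1)`-element sets of positions among the first `t`
positions on which `w` takes a common value. -/
def W {n N : ℕ} (j t : ℕ) (w : Fin N → Fin n) : ℕ :=
  ((Finset.univ.powersetCard (j + 1)).filter fun S : Finset (Fin N) =>
    (∀ s ∈ S, (s : ℕ) < t) ∧ ∃ i, ∀ s ∈ S, w s = i).card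

/-- `beta n m j = (1/n) ∑ᵢ C(mᵢ, j) / m^j` where `m = N/n` is the average multiplicity. -/
noncomputable def beta (n : ℕ) (m : Fin n → ℕ) (j : ℕ) : ℝ :=
  (1 / (n : ℝ)) * ∑ i, ((m i).choose j : ℝ) / (((∑ k, m k : ℕ) : ℝ) / (n : ℝ)) ^ j

/-- The number of correct guesses of the strategy `g` on the deck `w`, the cards being
revealed in order `w 0, w 1, …`; before the `t`-th card is revealed the guesser sees the
list of previously revealed cards. -/
def score {n N : ℕ} (g : List (Fin n) → Fin n) (w : Fin N → Fin n) : ℕ :=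
  (Finset.univ.filter fun t : Fin N => g ((List.ofFn w).take (t : ℕ)) = w t).card

/-- Expected number of correct guesses under the best strategy. -/
noncomputable def ESplus (n : ℕ) (m : Fin n → ℕ) : ℝ :=
  ⨆ g : List (Fin n) → Fin n, expect n m fun w => (score g w : ℝ)

/-- Expected number of correct guesses under the worst strategy. -/
noncomputable def ESminus (n : ℕ) (m : Fin n → ℕ) : ℝ :=
  ⨅ g : List (Fin n) → Fin n, expect n m fun w => (score g w : ℝ)

/-- Harmonic number `H k = 1 + 1/2 + ⋯ + 1/k`. -/
noncomputable def harm (k : ℕ) : ℝ := ∑ i ∈ Finset.range k, (1 : ℝ) / (i + 1)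


/-- count of type `i` among the first `t` cards -/
def cnt {n N : ℕ} (i : Fin n) (t : ℕ) (w : Fin N → Fin n) : ℕ :=
  (Finset.univ.filter fun s : Fin N => (s : ℕ) < t ∧ w s = i).card

lemma cnt_mono {n N : ℕ} (i : Fin n) {t t' : ℕ} (h : t ≤ t') (w : Fin N → Fin n) :
    cnt i t w ≤ cnt i t' w := by
  apply Finset.card_le_card
  intro s hs
  simp only [Finset.mem_filter, Finset.mem_univ, true_and] at hs ⊢
  exact ⟨lt_of_lt_of_le hs.1 h, hs.2⟩

lemma cnt_zero {n N : ℕ} (i : Fin n) (w : Fin N → Fin n) : cnt i 0 w = 0 := by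
  simp [cnt]

lemma cnt_eq_of_agree {n N : ℕ} {w w' : Fin N → Fin n} {t : ℕ}
    (h : ∀ s : Fin N, (s : ℕ) < t → w s = w' s) (i : Fin n) : cnt i t w = cnt i t w' := by
  unfold cnt
  congr 1
  ext s
  simp only [Finset.mem_filter, Finset.mem_univ, true_and]
  constructor
  · rintro ⟨h1, h2⟩; exact ⟨h1, (h s h1).symm.trans h2⟩
  · rintro ⟨h1, h2⟩; exact ⟨h1, (h s h1).trans h2⟩

lemma mem_decks {n : ℕ} {m : Fin n → ℕ} {w : Fin (∑ i, m i) → Fin n} :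
    w ∈ decks n m ↔ ∀ i, (Finset.univ.filter fun s => w s = i).card = m i := by
  simp [decks]

lemma comp_perm_mem_decks {n : ℕ} {m : Fin n → ℕ} {w : Fin (∑ i, m i) → Fin n}
    (hw : w ∈ decks n m) (σ : Equiv.Perm (Fin (∑ i, m i))) : w ∘ σ ∈ decks n m := by
  rw [mem_decks] at hw ⊢
  intro i
  rw [← hw i]
  apply Finset.card_bij (fun s _ => σ s)
  · intro a ha
    simp only [Finset.mem_filter, Finset.mem_univ, true_and] at ha ⊢
    exact ha
  · intro a _ b _ hab
    exact σ.injective hab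
  · intro b hb
    refine ⟨σ.symm b, ?_, by simp⟩
    simp only [Finset.mem_filter, Finset.mem_univ, true_and] at hb ⊢
    simpa using hb

lemma cnt_le {n : ℕ} {m : Fin n → ℕ} {w : Fin (∑ i, m i) → Fin n}
    (hw : w ∈ decks n m) (i : Fin n) (t : ℕ) : cnt i t w ≤ m i := by
  rw [← (mem_decks.mp hw i)]
  exact Finset.card_le_card (fun s hs => by
    simp only [Finset.mem_filter, Finset.mem_univ, true_and] at hs ⊢; exact hs.2)



lemma comp_swap_agree {n N : ℕ} (w : Fin N → Fin n) (t s : Fin N) (h : (t : ℕ) ≤ s)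
    (u : Fin N) (hu : (u : ℕ) < t) : (w ∘ Equiv.swap t s) u = w u := by
  have h1 : u ≠ t := Fin.ne_of_val_ne (Nat.ne_of_lt hu)
  have h2 : u ≠ s := Fin.ne_of_val_ne (Nat.ne_of_lt (lt_of_lt_of_le hu h))
  simp [Function.comp, Equiv.swap_apply_of_ne_of_ne h1 h2]

lemma comp_swap_swap {n N : ℕ} (w : Fin N → Fin n) (t s : Fin N) :
    (w ∘ Equiv.swap t s) ∘ Equiv.swap t s = w := by
  funext x
  simp [Function.comp, Equiv.swap_apply_self]

lemma take_comp_swap {n N : ℕ} (w : Fin N → Fin n) (t s : Fin N) (h : (t : ℕ) ≤ s) :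
    (List.ofFn (w ∘ Equiv.swap t s)).take (t : ℕ) = (List.ofFn w).take (t : ℕ) := by
  apply List.ext_getElem (by simp)
  intro k h1 h2
  simp only [List.getElem_take, List.getElem_ofFn]
  have hk : k < (t : ℕ) := by simpa using h1
  exact comp_swap_agree w t s h _ (by simpa using hk)

lemma card_filter_lt {N : ℕ} (t : ℕ) (ht : t ≤ N) :
    (Finset.univ.filter fun s : Fin N => (s : ℕ) < t).card = t := by
  apply Finset.card_bij (fun (s : Fin N) _ => (s : ℕ)) ?_ ?_ ?_ |>.trans (Finset.card_range t)
  · intro a ha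
    simp only [Finset.mem_filter, Finset.mem_univ, true_and] at ha
    simpa using ha
  · intro a _ b _ hab; exact Fin.val_injective hab
  · intro b hb
    simp only [Finset.mem_range] at hb
    exact ⟨⟨b, lt_of_lt_of_le hb ht⟩, by simp [hb], rfl⟩

lemma card_filter_ge {N : ℕ} (t : ℕ) (ht : t ≤ N) :
    (Finset.univ.filter fun s : Fin N => t ≤ (s : ℕ)).card = N - t := by
  have h := Finset.card_filter_add_card_filter_not
    (s := (Finset.univ : Finset (Fin N))) (p := fun s : Fin N => (s : ℕ) < t)
  simp only [not_lt] at h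
  rw [card_filter_lt t ht] at h
  simp only [Finset.card_univ, Fintype.card_fin] at h
  omega
section
open Finset Equiv

lemma swap_slice {n : ℕ} {m : Fin n → ℕ} (t s : Fin (∑ i, m i)) (hts : (t : ℕ) ≤ s)
    (γ : (Fin (∑ i, m i) → Fin n) → Fin n)
    (hγ : ∀ w, γ (w ∘ Equiv.swap t s) = γ w) :
    ((decks n m).filter fun w => w s = γ w).card
      = ((decks n m).filter fun w => w t = γ w).card := by
  apply Finset.card_bij' (fun w _ => w ∘ Equiv.swap t s) (fun w _ => w ∘ Equiv.swap t s)
  · intro w hw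
    simp only [Finset.mem_filter] at hw ⊢
    refine ⟨comp_perm_mem_decks hw.1 _, ?_⟩
    rw [hγ]
    simpa [Function.comp, Equiv.swap_apply_left] using hw.2
  · intro w hw
    simp only [Finset.mem_filter] at hw ⊢
    refine ⟨comp_perm_mem_decks hw.1 _, ?_⟩
    rw [hγ]
    simpa [Function.comp, Equiv.swap_apply_right] using hw.2
  · intro w _; exact comp_swap_swap w t s
  · intro w _; exact comp_swap_swap w t s

lemma key_count {n : ℕ} (m : Fin n → ℕ) (t : Fin (∑ i, m i))
    (γ : (Fin (∑ i, m i) → Fin n) → Fin n)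
    (hγ : ∀ (w : Fin (∑ i, m i) → Fin n) (s : Fin (∑ i, m i)), (t : ℕ) ≤ (s : ℕ) →
      γ (w ∘ Equiv.swap t s) = γ w) :
    (∑ i, m i - (t : ℕ)) * ((decks n m).filter fun w => w t = γ w).card
      = ∑ w ∈ decks n m, (m (γ w) - cnt (γ w) (t : ℕ) w) := by
  classical
  have step1 : ∀ w ∈ decks n m, m (γ w) - cnt (γ w) (t : ℕ) w
      = (Finset.univ.filter fun s : Fin (∑ i, m i) => (t : ℕ) ≤ (s : ℕ) ∧ w s = γ w).card := by
    intro w hw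
    have hsplit := Finset.card_filter_add_card_filter_not
      (s := Finset.univ.filter fun s : Fin (∑ i, m i) => w s = γ w)
      (p := fun s : Fin (∑ i, m i) => (s : ℕ) < (t : ℕ))
    rw [Finset.filter_filter, Finset.filter_filter] at hsplit
    have e1 : (Finset.univ.filter fun s : Fin (∑ i, m i) => w s = γ w ∧ (s : ℕ) < (t : ℕ))
        = Finset.univ.filter fun s : Fin (∑ i, m i) => (s : ℕ) < (t : ℕ) ∧ w s = γ w := by
      ext s; simp [and_comm]
    have e2 : (Finset.univ.filter fun s : Fin (∑ i, m i) => w s = γ w ∧ ¬ (s : ℕ) < (t : ℕ))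
        = Finset.univ.filter fun s : Fin (∑ i, m i) => (t : ℕ) ≤ (s : ℕ) ∧ w s = γ w := by
      ext s; simp [and_comm, not_lt]
    rw [e1, e2, mem_decks.mp hw (γ w)] at hsplit
    have : cnt (γ w) (t : ℕ) w ≤ m (γ w) := cnt_le hw _ _
    unfold cnt
    omega
  rw [Finset.sum_congr rfl step1]
  have step2 : ∀ w ∈ decks n m,
      (Finset.univ.filter fun s : Fin (∑ i, m i) => (t : ℕ) ≤ (s : ℕ) ∧ w s = γ w).card
        = ∑ s : Fin (∑ i, m i), if (t : ℕ) ≤ (s : ℕ) ∧ w s = γ w then 1 else 0 :=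
    fun w _ => Finset.card_filter _ _
  rw [Finset.sum_congr rfl step2, Finset.sum_comm]
  have step3 : ∀ s : Fin (∑ i, m i),
      (∑ w ∈ decks n m, if (t : ℕ) ≤ (s : ℕ) ∧ w s = γ w then 1 else 0)
        = if (t : ℕ) ≤ (s : ℕ) then ((decks n m).filter fun w => w t = γ w).card else 0 := by
    intro s
    by_cases h : (t : ℕ) ≤ (s : ℕ)
    · simp only [h, true_and, if_true]
      rw [← Finset.card_filter]
      exact swap_slice t s h γ (fun w => hγ w s h)
    · simp [h]
  rw [Finset.sum_congr rfl (fun s _ => step3 s), ← Finset.sum_filter]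
  rw [Finset.sum_const, card_filter_ge (t : ℕ) (le_of_lt t.isLt), smul_eq_mul]
end
section
open Finset

lemma count_take {n N : ℕ} (w : Fin N → Fin n) (i : Fin n) :
    ∀ t, t ≤ N → ((List.ofFn w).take t).count i = cnt i t w := by
  intro t
  induction t with
  | zero => intro _; simp [cnt]
  | succ t ih =>
    intro ht
    have ht' : t < N := ht
    rw [List.take_succ]
    have hget : (List.ofFn w)[t]? = some (w ⟨t, ht'⟩) := by
      rw [List.getElem?_eq_getElem (by simpa using ht')]
      simp
    rw [hget, List.count_append, ih (le_of_lt ht')]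
    have hsplit : (Finset.univ.filter fun s : Fin N => (s : ℕ) < t + 1 ∧ w s = i)
        = (Finset.univ.filter fun s : Fin N => (s : ℕ) < t ∧ w s = i)
          ∪ (Finset.univ.filter fun s : Fin N => (s : ℕ) = t ∧ w s = i) := by
      ext s
      simp only [Finset.mem_filter, Finset.mem_univ, true_and, Finset.mem_union]
      constructor
      · rintro ⟨h1, h2⟩
        rcases Nat.lt_succ_iff_lt_or_eq.mp h1 with h | h
        · exact Or.inl ⟨h, h2⟩
        · exact Or.inr ⟨h, h2⟩
      · rintro (⟨h1, h2⟩ | ⟨h1, h2⟩) <;> exact ⟨by omega, h2⟩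
    have hdisj : Disjoint (Finset.univ.filter fun s : Fin N => (s : ℕ) < t ∧ w s = i)
        (Finset.univ.filter fun s : Fin N => (s : ℕ) = t ∧ w s = i) := by
      rw [Finset.disjoint_filter]
      rintro s _ ⟨h1, _⟩ ⟨h2, _⟩
      omega
    have hsingle : (Finset.univ.filter fun s : Fin N => (s : ℕ) = t ∧ w s = i).card
        = if w ⟨t, ht'⟩ = i then 1 else 0 := by
      by_cases h : w ⟨t, ht'⟩ = i
      · rw [if_pos h]
        rw [Finset.card_eq_one]
        refine ⟨⟨t, ht'⟩, ?_⟩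
        ext s
        simp only [Finset.mem_filter, Finset.mem_univ, true_and, Finset.mem_singleton]
        constructor
        · rintro ⟨h1, _⟩; exact Fin.ext h1
        · rintro rfl; exact ⟨rfl, h⟩
      · rw [if_neg h]
        rw [Finset.card_eq_zero]
        ext s
        simp only [Finset.mem_filter, Finset.mem_univ, true_and, Finset.notMem_empty,
          iff_false, not_and]
        intro h1
        have : s = ⟨t, ht'⟩ := Fin.ext h1
        rw [this]
        exact h
    unfold cnt
    rw [hsplit, Finset.card_union_of_disjoint hdisj, hsingle]
    simp [List.count_singleton]
end


section
open Finset

lemma le_T_iff {n N : ℕ} (j t : ℕ) (w : Fin N → Fin n) (ht : t ≤ N) :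
    t ≤ T j w ↔ ∀ i, cnt i t w ≤ j := by
  have hS : T j w = sSup {u | u ≤ N ∧ ∀ i : Fin n, cnt i u w ≤ j} := rfl
  set S : Set ℕ := {u | u ≤ N ∧ ∀ i : Fin n, cnt i u w ≤ j} with hSdef
  have hne : S.Nonempty := ⟨0, by simp [hSdef, cnt_zero]⟩
  have hbdd : BddAbove S := ⟨N, fun x hx => hx.1⟩
  have hmem : sSup S ∈ S := Nat.sSup_mem hne hbdd
  rw [hS]
  constructor
  · intro h i
    exact le_trans (cnt_mono i h w) (hmem.2 i)
  · intro h
    exact le_csSup hbdd ⟨ht, h⟩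

noncomputable def g0 {n : ℕ} (hn : 0 < n) (l : List (Fin n)) : Fin n :=
  ((Finset.univ : Finset (Fin n)).exists_mem_eq_sup'
    ⟨⟨0, hn⟩, Finset.mem_univ _⟩ fun i => l.count i).choose

lemma g0_spec {n : ℕ} (hn : 0 < n) (l : List (Fin n)) (i : Fin n) :
    l.count i ≤ l.count (g0 hn l) := by
  unfold g0
  have h := ((Finset.univ : Finset (Fin n)).exists_mem_eq_sup'
    ⟨⟨0, hn⟩, Finset.mem_univ _⟩ fun i => l.count i).choose_spec
  rw [← h.2]
  exact Finset.le_sup' (fun i => l.count i) (Finset.mem_univ i)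

lemma cnt_g0 {n N : ℕ} (hn : 0 < n) (w : Fin N → Fin n) (t : ℕ) (ht : t ≤ N) :
    cnt (g0 hn ((List.ofFn w).take t)) t w = Finset.univ.sup fun i => cnt i t w := by
  apply le_antisymm
  · exact Finset.le_sup (f := fun i => cnt i t w) (Finset.mem_univ _)
  · apply Finset.sup_le
    intro i _
    rw [← count_take w i t ht, ← count_take w _ t ht]
    exact g0_spec hn _ i

lemma card_range_filter {mm c : ℕ} :
    ((Finset.range mm).filter fun j => c ≤ j).card = mm - c := by
  have : (Finset.range mm).filter (fun j => c ≤ j) = Finset.Ico c mm := by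
    ext j
    simp only [Finset.mem_filter, Finset.mem_range, Finset.mem_Ico]
    omega
  rw [this, Nat.card_Ico]

lemma sum_score {n : ℕ} (m : Fin n → ℕ) (g : List (Fin n) → Fin n) :
    ∑ w ∈ decks n m, score g w
      = ∑ t : Fin (∑ i, m i),
          ((decks n m).filter fun w => w t = g ((List.ofFn w).take (t : ℕ))).card := by
  classical
  have e1 : ∀ w ∈ decks n m, score g w
      = ∑ t : Fin (∑ i, m i), if w t = g ((List.ofFn w).take (t : ℕ)) then 1 else 0 := by
    intro w _
    unfold score
    rw [Finset.card_filter]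
    exact Finset.sum_congr rfl fun t _ => if_congr eq_comm rfl rfl
  rw [Finset.sum_congr rfl e1, Finset.sum_comm]
  exact Finset.sum_congr rfl fun t _ => (Finset.card_filter _ _).symm
end





section
open Finset

/-- Identity: worst-strategy expectation for even decks.
For the deck with `n` types each of multiplicity `mm` (so `N = n·mm`), revealing cards in
the order `w 0, w 1, …` (from the top), one has
`E[S⁻] = ∑_{j=0}^{mm−1} ∑_{t=0}^{n·mm−1} P(T_j ≥ t)/(n·mm − t)`,
where `T_j` counts from the top. -/
theorem ESminus_formula (n mm : ℕ) :
    ESminus n (fun _ : Fin n => mm) =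
      ∑ j ∈ Finset.range mm, ∑ t ∈ Finset.range (n * mm),
        pr n (fun _ : Fin n => mm) (fun w => t ≤ T j w) / ((n * mm - t : ℕ) : ℝ) := by
  classical
  rcases Nat.eq_zero_or_pos n with hn | hn
  · subst hn
    have hem : IsEmpty (List (Fin 0) → Fin 0) := ⟨fun g => (g []).elim0⟩
    rw [ESminus, Real.iInf_of_isEmpty]
    simp
  set m : Fin n → ℕ := fun _ => mm with hm
  set Nd : ℕ := ∑ i : Fin n, m i with hNd
  have hN : n * mm = Nd := by simp [hNd, hm, Finset.sum_const, Finset.card_univ, mul_comm]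
  rw [hN]
  set D : Finset (Fin Nd → Fin n) := decks n m with hDdef
  -- the per-strategy per-time counts
  set A : (List (Fin n) → Fin n) → Fin Nd → ℕ := fun g t =>
    (D.filter fun w => w t = g ((List.ofFn w).take (t : ℕ))).card with hA
  set B : ℕ → ℕ := fun u => ∑ w ∈ D, (mm - Finset.univ.sup fun i => cnt i u w) with hB
  have hkey : ∀ (g : List (Fin n) → Fin n) (t : Fin Nd),
      (Nd - (t : ℕ)) * A g t
        = ∑ w ∈ D, (mm - cnt (g ((List.ofFn w).take (t : ℕ))) (t : ℕ) w) := by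
    intro g t
    exact key_count m t (fun w => g ((List.ofFn w).take (t : ℕ)))
      (fun w s hs => congrArg g (take_comp_swap w t s hs))
  have hge : ∀ (g : List (Fin n) → Fin n) (t : Fin Nd), B (t : ℕ) ≤ (Nd - (t : ℕ)) * A g t := by
    intro g t
    rw [hkey g t, hB]
    apply Finset.sum_le_sum
    intro w _
    exact Nat.sub_le_sub_left (Finset.le_sup (f := fun i => cnt i (t : ℕ) w)
      (Finset.mem_univ _)) mm
  have heqn : ∀ t : Fin Nd, (Nd - (t : ℕ)) * A (g0 hn) t = B (t : ℕ) := by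
    intro t
    rw [hkey (g0 hn) t, hB]
    apply Finset.sum_congr rfl
    intro w _
    rw [cnt_g0 hn w (t : ℕ) (le_of_lt t.isLt)]
  have hscore : ∀ g : List (Fin n) → Fin n, ∑ w ∈ D, score g w = ∑ t : Fin Nd, A g t :=
    fun g => sum_score m g
  have hBC : ∀ t : ℕ, t ≤ Nd →
      ∑ j ∈ Finset.range mm, (D.filter fun w => t ≤ T j w).card = B t := by
    intro t ht
    have e1 : ∀ j ∈ Finset.range mm, (D.filter fun w => t ≤ T j w).card
        = ∑ w ∈ D, if t ≤ T j w then 1 else 0 := fun j _ => Finset.card_filter _ _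
    rw [Finset.sum_congr rfl e1, Finset.sum_comm, hB]
    apply Finset.sum_congr rfl
    intro w _
    have e2 : ∀ j ∈ Finset.range mm, (if t ≤ T j w then (1:ℕ) else 0)
        = if (Finset.univ.sup fun i => cnt i t w) ≤ j then 1 else 0 := by
      intro j _
      refine if_congr ?_ rfl rfl
      rw [le_T_iff j t w ht, Finset.sup_le_iff]
      simp
    rw [Finset.sum_congr rfl e2, ← Finset.card_filter, card_range_filter]
  -- real-valued part
  set DC : ℝ := (D.card : ℝ) with hDC
  have hexpect : ∀ g : List (Fin n) → Fin n,
      expect n m (fun w => (score g w : ℝ)) = (∑ t : Fin Nd, (A g t : ℝ)) / DC := by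
    intro g
    rw [_root_.expect]
    congr 1
    rw [← Nat.cast_sum, ← Nat.cast_sum, hscore g]
  by_cases hD0 : D.card = 0
  · -- empty decks: everything is zero
    have hDe : D = ∅ := Finset.card_eq_zero.mp hD0
    have hexp0 : ∀ g : List (Fin n) → Fin n,
        expect n m (fun w => (score g w : ℝ)) = 0 := by
      intro g
      rw [_root_.expect, ← hDdef, hDe]
      simp
    haveI : Nonempty (List (Fin n) → Fin n) := ⟨fun _ => ⟨0, hn⟩⟩
    rw [ESminus]
    simp only [hexp0]
    rw [ciInf_const]
    symm
    apply Finset.sum_eq_zero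
    intro j _
    apply Finset.sum_eq_zero
    intro t _
    rw [pr, ← hDdef, hDe]
    simp
  have hDCpos : 0 < DC := by
    rw [hDC]
    exact_mod_cast Nat.pos_of_ne_zero hD0
  set V : ℝ := ∑ t : Fin Nd, (B (t : ℕ) : ℝ) / (((Nd - (t : ℕ) : ℕ) : ℝ) * DC) with hV
  have hnt : ∀ t : Fin Nd, (0:ℝ) < ((Nd - (t : ℕ) : ℕ) : ℝ) := by
    intro t
    have := t.isLt
    exact_mod_cast Nat.sub_pos_of_lt this
  have hlow : ∀ g : List (Fin n) → Fin n,
      V ≤ expect n m (fun w => (score g w : ℝ)) := by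
    intro g
    rw [hexpect g, Finset.sum_div, hV]
    apply Finset.sum_le_sum
    intro t _
    rw [div_le_div_iff₀ (mul_pos (hnt t) hDCpos) hDCpos]
    have hc : (B (t : ℕ) : ℝ) ≤ ((Nd - (t : ℕ) : ℕ) : ℝ) * (A g t : ℝ) := by
      exact_mod_cast hge g t
    calc (B (t : ℕ) : ℝ) * DC ≤ (((Nd - (t : ℕ) : ℕ) : ℝ) * (A g t : ℝ)) * DC := by
          apply mul_le_mul_of_nonneg_right hc (le_of_lt hDCpos)
      _ = (A g t : ℝ) * (((Nd - (t : ℕ) : ℕ) : ℝ) * DC) := by ring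
  have heq' : expect n m (fun w => (score (g0 hn) w : ℝ)) = V := by
    rw [hexpect, Finset.sum_div, hV]
    apply Finset.sum_congr rfl
    intro t _
    have hc : ((Nd - (t : ℕ) : ℕ) : ℝ) * (A (g0 hn) t : ℝ) = (B (t : ℕ) : ℝ) := by
      exact_mod_cast heqn t
    rw [← hc, mul_div_mul_left _ _ (ne_of_gt (hnt t))]
  have hES : ESminus n m = V := by
    haveI : Nonempty (List (Fin n) → Fin n) := ⟨fun _ => ⟨0, hn⟩⟩
    have hbdd : BddBelow (Set.range fun g : List (Fin n) → Fin n =>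
        expect n m fun w => (score g w : ℝ)) := by
      refine ⟨V, ?_⟩
      rintro x ⟨g, rfl⟩
      exact hlow g
    rw [ESminus]
    apply le_antisymm
    · exact le_of_le_of_eq (ciInf_le hbdd (g0 hn)) heq'
    · exact le_ciInf hlow
  rw [hES, hV]
  rw [Finset.sum_comm]
  rw [← Fin.sum_univ_eq_sum_range (fun u => ∑ j ∈ Finset.range mm,
    pr n m (fun w => u ≤ T j w) / ((Nd - u : ℕ) : ℝ)) Nd]
  apply Finset.sum_congr rfl
  intro t _
  have hpr : ∀ j ∈ Finset.range mm, pr n m (fun w => (t : ℕ) ≤ T j w) / ((Nd - (t : ℕ) : ℕ) : ℝ)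
      = ((D.filter fun w => (t : ℕ) ≤ T j w).card : ℝ) / (((Nd - (t : ℕ) : ℕ) : ℝ) * DC) := by
    intro j _
    rw [pr, Finset.filter_congr_decidable, ← hDdef, ← hDC, div_div, mul_comm]
  rw [Finset.sum_congr rfl hpr, ← Finset.sum_div, ← Nat.cast_sum,
    hBC (t : ℕ) (le_of_lt t.isLt)]
end
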